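/- Let 𝒯 = {(14253, 10101), (15243, 10101)} be a set of two templates, and define the sequence (s_n) by s_0 = s_1 = 1 and, for n > 1, s_n = Σ_{i=1}^{n-1} Σ_{j=i+1}^{n} 2·s_{i-1}·s_{j-i-1}·s_{n-j}. Then |S_{n,𝒯}| = s_n for all n ≥ 0. -/

import Mathlib

/-- A *permutation word* of length `n`: a list that is a rearrangement of `1, 2, ..., n`
(where `n` is its length). -/
def IsPermWord (w : List ℕ) : Prop := w.Perm (List.range' 1 w.length)

/-- Two words are *order-isomorphic*: they have the same length and corresponding
entries compare in the same way. -/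
def OrderIsoWord (u v : List ℕ) : Prop :=
  u.length = v.length ∧
    ∀ (i j : ℕ) (hi : i < u.length) (hj : j < u.length)
      (hi' : i < v.length) (hj' : j < v.length),
      (u[i]'hi < u[j]'hj ↔ v[i]'hi' < v[j]'hj')

/-- `w` contains a copy of the pattern `σ`: some subsequence of `w` (given by increasing
indices) is order-isomorphic to `σ`. -/
def ContainsPattern (w σ : List ℕ) : Prop :=
  ∃ s : List ℕ, s.Sublist w ∧ OrderIsoWord s σ

/-- `w` avoids the pattern `σ`: it contains no copy of `σ`. -/
def AvoidsPattern (w σ : List ℕ) : Prop := ¬ ContainsPattern w σ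

/-- Membership in the family of permutation-word sets `S_{n,𝒯}` generated by a finite
set `𝒯` of templates (the length index `n` is just the length of the word).
`InS Ts w` holds iff `w` is the empty word, a single-letter word, or, for some template
`(P, B) ∈ Ts`, the concatenation of subwords `W_1, ..., W_t` (`t = |P|`, total length at
least `2`) such that: whenever `p_i > p_j` every element of `W_i` exceeds every element of
`W_j`; each `W_i` is order-isomorphic to a permutation word `V_i` that again satisfies
`InS`; and whenever `b_i = 0` the subword `W_i` has exactly one element. -/
inductive InS (Ts : List (List ℕ × List Bool)) : List ℕ → Prop where
  | nil : InS Ts []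
  | single (x : ℕ) : InS Ts [x]
  | join (P : List ℕ) (B : List Bool) (hT : (P, B) ∈ Ts)
      (Ws Vs : List (List ℕ)) (hlen : Ws.length = P.length)
      (hVs : Vs.length = Ws.length)
      (h2 : 2 ≤ Ws.flatten.length)
      (horder : ∀ (i j : ℕ) (hi : i < Ws.length) (hj : j < Ws.length),
          P[j]'(by omega) < P[i]'(by omega) →
          ∀ x ∈ Ws[i]'hi, ∀ y ∈ Ws[j]'hj, y < x)
      (hiso : ∀ (i : ℕ) (hi : i < Ws.length),
          IsPermWord (Vs[i]'(by omega)) ∧ OrderIsoWord (Ws[i]'hi) (Vs[i]'(by omega)))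
      (hrec : ∀ (i : ℕ) (hi : i < Vs.length), InS Ts (Vs[i]'hi))
      (hzero : ∀ (i : ℕ) (hi : i < Ws.length) (hb : i < B.length),
          B[i]'hb = false → (Ws[i]'hi).length = 1) :
      InS Ts Ws.flatten

/-- The set `S_{n,𝒯}` of permutation words of length `n` generated by the finite set
`Ts` of templates. -/
def Sset (Ts : List (List ℕ × List Bool)) (n : ℕ) : Set (List ℕ) :=
  {w | w.length = n ∧ IsPermWord w ∧ InS Ts w}

/-!
In both templates the singleton slots hold the two largest values and the three free slots
hold consecutive value intervals, in increasing order. So a word of length `n ≥ 2` in the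
family is uniquely `A, x, B, y, C` with `{x, y} = {n - 1, n}`, where `A` and the standardizations
of `B` and `C` are again in the family; `x, y` sit at positions `i < j`, the three blocks have
lengths `i - 1`, `j - i - 1`, `n - j`, and the two orders of `x, y` give the factor `2`.
-/

section

open List

theorem List.countP_range'_one_le (m : ℕ) :
    ∀ L : ℕ, (range' 1 L).countP (· ≤ m) = min L m
  | 0 => by simp
  | L + 1 => by
    rw [range'_1_concat, countP_append, countP_range'_one_le m L]
    simp only [countP_singleton, decide_eq_true_eq]
    split_ifs <;> omega

theorem List.countP_eq_countP_of_getElem {α β : Type*} {u : List α} {v : List β}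
    {p : α → Bool} {q : β → Bool} (hlen : u.length = v.length)
    (h : ∀ i (hu : i < u.length) (hv : i < v.length), p u[i] = q v[i]) :
    u.countP p = v.countP q := by
  induction u generalizing v with
  | nil => simp_all [eq_comm]
  | cons a u ih =>
    obtain _ | ⟨b, v⟩ := v
    · simp at hlen
    · have hab : p a = q b := h 0 (by simp) (by simp)
      simp only [countP_cons, hab]
      rw [ih (by simpa using hlen) fun i hu hv => h (i + 1) (by simpa) (by simpa)]

theorem List.range'_append_of_add_eq {s t m n : ℕ} (h : s + m = t) :
    range' s m ++ range' t n = range' s (m + n) := by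
  subst h
  exact range'_append_1

theorem List.perm_range'_two_iff {x y s : ℕ} :
    [x, y].Perm (range' s 2) ↔ (x = s ∧ y = s + 1) ∨ (x = s + 1 ∧ y = s) := by
  refine ⟨fun h => ?_, ?_⟩
  · have hne : x ≠ y := by simpa using h.nodup_iff.mpr nodup_range'
    have hx := mem_range'_1.mp (h.subset (by simp : x ∈ [x, y]))
    have hy := mem_range'_1.mp (h.subset (by simp : y ∈ [x, y]))
    omega
  · rintro (⟨rfl, rfl⟩ | ⟨rfl, rfl⟩)
    exacts [.refl _, .swap _ _ _]

theorem List.Perm.range'_of_append_of_lt {L M : List ℕ} {s : ℕ}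
    (h : (L ++ M).Perm (range' s (L.length + M.length)))
    (hlt : ∀ u ∈ L, ∀ v ∈ M, u < v) :
    L.Perm (range' s L.length) ∧ M.Perm (range' (s + L.length) M.length) := by
  have hL : L.Perm (range' s L.length) := by
    refine (subperm_of_subset ((h.nodup_iff.mpr nodup_range').of_append_left) ?_).perm_of_length_le
      (by simp)
    intro y hy
    have hys := mem_range'_1.mp (h.subset (mem_append_left M hy))
    -- `L` is downward closed in the interval: an entry of `M` would exceed `y`
    have hdown : range' s (y + 1 - s) ⊆ L := by
      intro z hz
      rw [mem_range'_1] at hz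
      rcases mem_append.mp (h.symm.subset (mem_range'_1.mpr (by omega : s ≤ z ∧ z < s + _)))
        with hzL | hzM
      · exact hzL
      · exact absurd (hlt y hy z hzM) (by omega)
    have := (subperm_of_subset nodup_range' hdown).length_le
    simp only [length_range'] at this
    exact mem_range'_1.mpr (by omega)
  refine ⟨hL, (perm_append_left_iff L).mp (h.trans ?_)⟩
  rw [← range'_append_1]
  exact (hL.append_right _).symm

theorem List.perm_append_cons_append_cons {α : Type*} (l₁ l₂ l₃ : List α) (x y : α) :
    (l₁ ++ x :: (l₂ ++ y :: l₃)).Perm (l₁ ++ (l₂ ++ (l₃ ++ [x, y]))) := by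
  classical
  rw [perm_iff_count]
  intro a
  simp only [count_append, count_cons, count_nil]
  omega

theorem List.append_cons_inj_of_forall_of_not {α : Type*} (p : α → Bool) {l l' r r' : List α} {x x' : α}
    (hl : ∀ u ∈ l, p u) (hl' : ∀ u ∈ l', p u) (hx : ¬ p x) (hx' : ¬ p x')
    (h : l ++ x :: r = l' ++ x' :: r') : l = l' ∧ x = x' ∧ r = r' := by
  have key : ∀ {l : List α} {x r}, (∀ u ∈ l, p u) → ¬ p x →
      (l ++ x :: r).takeWhile p = l :=
    fun hl hx => by simp [takeWhile_append_of_pos hl, hx]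
  obtain rfl : l = l' := by rw [← key hl hx, h, key hl' hx']
  simpa using h

theorem List.eq_five_of_length_eq {α : Type*} {l : List α} (h : l.length = 5) :
    ∃ a b c d e, l = [a, b, c, d, e] := by
  rcases l with _ | ⟨a, _ | ⟨b, _ | ⟨c, _ | ⟨d, _ | ⟨e, _ | _⟩⟩⟩⟩⟩ <;> simp at h ⊢

namespace IsPermWord

variable {w : List ℕ}

theorem mem_bounds (hw : IsPermWord w) {x : ℕ} (hx : x ∈ w) : 1 ≤ x ∧ x ≤ w.length := by
  have := mem_range'_1.mp (hw.mem_iff.mp hx)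
  omega

theorem countP_le (hw : IsPermWord w) {m : ℕ} (hm : m ≤ w.length) :
    w.countP (· ≤ m) = m := by
  rw [hw.countP_eq, countP_range'_one_le]
  omega

theorem eq_of_orderIsoWord {v : List ℕ} (hw : IsPermWord w) (hv : IsPermWord v)
    (h : OrderIsoWord w v) : w = v := by
  refine ext_getElem h.1 fun i hiw hiv => ?_
  -- `w[i]` is the number of entries of `w` that are at most `w[i]`, an order-invariant count
  rw [← hw.countP_le (hw.mem_bounds (getElem_mem hiw)).2,
    ← hv.countP_le (hv.mem_bounds (getElem_mem hiv)).2]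
  refine countP_eq_countP_of_getElem h.1 fun j hjw hjv => ?_
  have := h.2 i j hiw hjw hiv hjv
  simp only [decide_eq_decide]
  omega

theorem map_add (hw : IsPermWord w) (k : ℕ) :
    (w.map (· + k)).Perm (range' (k + 1) w.length) := by
  simpa only [add_comm _ k, map_add_range'] using (hw : w.Perm _).map (· + k)

end IsPermWord

theorem isPermWord_singleton : IsPermWord [1] := by simp [IsPermWord]

theorem OrderIsoWord.refl (u : List ℕ) : OrderIsoWord u u := ⟨rfl, fun _ _ _ _ _ _ => Iff.rfl⟩

theorem orderIsoWord_singleton (x y : ℕ) : OrderIsoWord [x] [y] :=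
  ⟨rfl, fun i j hi hj _ _ => by
    simp only [length_singleton, Nat.lt_one_iff] at hi hj
    subst hi hj
    simp⟩

theorem orderIsoWord_map_add_left_iff {u v : List ℕ} (k : ℕ) :
    OrderIsoWord (u.map (· + k)) v ↔ OrderIsoWord u v := by
  simp [OrderIsoWord]

abbrev templates : List (List ℕ × List Bool) :=
  [([1, 4, 2, 5, 3], [true, false, true, false, true]),
   ([1, 5, 2, 4, 3], [true, false, true, false, true])]

def Admissible (w : List ℕ) : Prop := IsPermWord w ∧ InS templates w

def glue (f : Bool) (A B C : List ℕ) : List ℕ :=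
  let m := A.length + B.length + C.length
  A ++ (if f then m + 2 else m + 1) ::
    (B.map (· + A.length) ++ (if f then m + 1 else m + 2) :: C.map (· + (A.length + B.length)))

theorem length_glue (f : Bool) (A B C : List ℕ) :
    (glue f A B C).length = A.length + B.length + C.length + 2 := by
  simp only [glue, length_append, length_cons, length_map]
  omega

theorem isPermWord_glue (f : Bool) {A B C : List ℕ} (hA : IsPermWord A) (hB : IsPermWord B)
    (hC : IsPermWord C) : IsPermWord (glue f A B C) := by
  set m := A.length + B.length + C.length
  have hxy : [if f then m + 2 else m + 1, if f then m + 1 else m + 2].Perm (range' (m + 1) 2) :=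
    perm_range'_two_iff.mpr (by cases f <;> simp)
  have hblocks : (A ++ (B.map (· + A.length) ++ (C.map (· + (A.length + B.length)) ++
      [if f then m + 2 else m + 1, if f then m + 1 else m + 2]))).Perm
      (range' 1 A.length ++ (range' (A.length + 1) B.length ++
        (range' (A.length + B.length + 1) C.length ++ range' (m + 1) 2))) :=
    hA.append ((hB.map_add _).append ((hC.map_add _).append hxy))
  unfold IsPermWord
  refine (perm_append_cons_append_cons _ _ _ _ _).trans (hblocks.trans ?_)
  rw [range'_append_of_add_eq (by omega), range'_append_of_add_eq (by omega),
    range'_append_of_add_eq (by omega), length_glue, add_assoc, add_assoc]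

theorem inS_glue (f : Bool) {A B C : List ℕ} (hA : Admissible A) (hB : Admissible B)
    (hC : Admissible C) : InS templates (glue f A B C) := by
  set m := A.length + B.length + C.length
  have hA' := fun u hu => hA.1.mem_bounds (x := u) hu
  have hB' := fun u hu => hB.1.mem_bounds (x := u) hu
  have hC' := fun u hu => hC.1.mem_bounds (x := u) hu
  have hflat : glue f A B C = [A, [if f then m + 2 else m + 1], B.map (· + A.length),
      [if f then m + 1 else m + 2], C.map (· + (A.length + B.length))].flatten := by
    simp [glue, m]
  rw [hflat]
  refine InS.join (if f then [1, 5, 2, 4, 3] else [1, 4, 2, 5, 3]) [true, false, true, false, true]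
    (by cases f <;> simp) _ [A, [1], B, [1], C] (by cases f <;> rfl) rfl (by rw [← hflat, length_glue]; omega)
    ?_ ?_ ?_ ?_
  · -- the blocks occupy the value ranges `[1, a]`, `(a, a + b]`, `(a + b, m]`, `{m + 1, m + 2}`
    intro i j hi hj hP u hu v hv
    simp only [length_cons, length_nil] at hi hj
    cases f <;> interval_cases i <;> interval_cases j <;>
      simp only [Bool.false_eq_true, if_true, if_false, getElem_cons_zero, getElem_cons_succ,
        mem_singleton, mem_map] at hP hu hv <;> grind
  · intro i hi
    simp only [length_cons, length_nil] at hi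
    interval_cases i
    · exact ⟨hA.1, .refl A⟩
    · exact ⟨isPermWord_singleton, orderIsoWord_singleton _ 1⟩
    · exact ⟨hB.1, (orderIsoWord_map_add_left_iff _).mpr (.refl B)⟩
    · exact ⟨isPermWord_singleton, orderIsoWord_singleton _ 1⟩
    · exact ⟨hC.1, (orderIsoWord_map_add_left_iff _).mpr (.refl C)⟩
  · intro i hi
    simp only [length_cons, length_nil] at hi
    interval_cases i
    exacts [hA.2, .single 1, hB.2, .single 1, hC.2]
  · intro i hi _ hb
    simp only [length_cons, length_nil] at hi
    interval_cases i <;> simp_all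

theorem glue_inj {f f' : Bool} {A B C A' B' C' : List ℕ} (hA : IsPermWord A) (hB : IsPermWord B)
    (hA' : IsPermWord A') (hB' : IsPermWord B')
    (h : glue f A B C = glue f' A' B' C') : f = f' ∧ A = A' ∧ B = B' ∧ C = C' := by
  obtain ⟨m, hm⟩ : ∃ m, A.length + B.length + C.length = m := ⟨_, rfl⟩
  have hm' : A'.length + B'.length + C'.length = m := by
    have := congrArg length h
    simp only [length_glue] at this
    omega
  have le_m : ∀ {D : List ℕ} (hD : IsPermWord D) (k : ℕ), k + D.length ≤ m →
      ∀ u ∈ D.map (· + k), decide (u ≤ m) := fun hD k hk u hu => by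
    obtain ⟨d, hd, rfl⟩ := mem_map.mp hu
    have := hD.mem_bounds hd
    simpa using by omega
  simp only [glue, hm, hm'] at h
  -- `A`, and then the shifted `B`, is the longest run of entries `≤ m` before a top value
  obtain ⟨rfl, hx, h⟩ := append_cons_inj_of_forall_of_not (fun u => decide (u ≤ m))
    (by simpa using le_m hA 0 (by omega)) (by simpa using le_m hA' 0 (by omega))
    (by split <;> simp) (by split <;> simp) h
  obtain rfl : f = f' := by cases f <;> cases f' <;> simp at hx ⊢
  obtain ⟨hBB, -, hCC⟩ := append_cons_inj_of_forall_of_not (fun u => decide (u ≤ m))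
    (le_m hB A.length (by omega)) (le_m hB' A.length (by omega))
    (by split <;> simp) (by split <;> simp) h
  obtain rfl := map_injective_iff.mpr (add_left_injective _) hBB
  exact ⟨rfl, rfl, rfl, map_injective_iff.mpr (add_left_injective _) hCC⟩

theorem exists_admissible_eq_map_add {W V : List ℕ} {k : ℕ}
    (hW : W.Perm (range' (1 + k) W.length)) (hWV : OrderIsoWord W V) (hV : Admissible V) :
    ∃ B, Admissible B ∧ W = B.map (· + k) := by
  have hWk : W = (W.map (· - k)).map (· + k) := by
    rw [map_map]
    conv_lhs => rw [← map_id W]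
    refine map_congr_left fun u hu => ?_
    have := mem_range'_1.mp (hW.subset hu)
    simp only [id, Function.comp]
    omega
  have hB : IsPermWord (W.map (· - k)) := by
    simpa [IsPermWord, map_sub_range'] using hW.map (· - k)
  refine ⟨W.map (· - k), ?_, hWk⟩
  rw [hB.eq_of_orderIsoWord hV.1 ((orderIsoWord_map_add_left_iff k).mp (hWk ▸ hWV))]
  exact hV

theorem exists_glue_of_blocks {W0 W2 W4 V0 V2 V4 : List ℕ} {x y : ℕ}
    (hw : IsPermWord (W0 ++ x :: (W2 ++ y :: W4)))
    (o0 : ∀ u ∈ W0, ∀ v ∈ W2 ++ (W4 ++ [x, y]), u < v)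
    (o2 : ∀ u ∈ W2, ∀ v ∈ W4 ++ [x, y], u < v) (o4 : ∀ u ∈ W4, ∀ v ∈ [x, y], u < v)
    (h0 : OrderIsoWord W0 V0) (hV0 : Admissible V0) (h2 : OrderIsoWord W2 V2)
    (hV2 : Admissible V2) (h4 : OrderIsoWord W4 V4) (hV4 : Admissible V4) :
    ∃ f A B C, Admissible A ∧ Admissible B ∧ Admissible C ∧
      W0 ++ x :: (W2 ++ y :: W4) = glue f A B C := by
  have h := (perm_append_cons_append_cons W0 W2 W4 x y).symm.trans hw
  rw [(perm_append_cons_append_cons W0 W2 W4 x y).length_eq, length_append] at h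
  obtain ⟨p0, h⟩ := h.range'_of_append_of_lt o0
  rw [length_append] at h
  obtain ⟨p2, h⟩ := h.range'_of_append_of_lt o2
  rw [length_append] at h
  obtain ⟨p4, pxy⟩ := h.range'_of_append_of_lt o4
  rw [add_assoc 1] at p4
  obtain ⟨B, hB, rfl⟩ := exists_admissible_eq_map_add p2 h2 hV2
  obtain ⟨C, hC, rfl⟩ := exists_admissible_eq_map_add p4 h4 hV4
  have hA : Admissible W0 := by rw [IsPermWord.eq_of_orderIsoWord p0 hV0.1 h0]; exact hV0
  rw [length_map, length_map, show 1 + W0.length + B.length + C.length =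
    W0.length + B.length + C.length + 1 by omega] at pxy
  rcases perm_range'_two_iff.mp pxy with ⟨rfl, rfl⟩ | ⟨rfl, rfl⟩
  · exact ⟨false, W0, B, C, hA, hB, hC, by rw [length_map]; rfl⟩
  · exact ⟨true, W0, B, C, hA, hB, hC, by rw [length_map]; rfl⟩

theorem blocks_lt_of_template {P W0 W2 W4 : List ℕ} {x y : ℕ}
    (hP : P = [1, 4, 2, 5, 3] ∨ P = [1, 5, 2, 4, 3])
    (hlen : [W0, [x], W2, [y], W4].length = P.length)
    (horder : ∀ i j (hi : i < [W0, [x], W2, [y], W4].length)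
      (hj : j < [W0, [x], W2, [y], W4].length), P[j]'(by omega) < P[i]'(by omega) →
        ∀ u ∈ [W0, [x], W2, [y], W4][i], ∀ v ∈ [W0, [x], W2, [y], W4][j], v < u) :
    (∀ u ∈ W0, ∀ v ∈ W2 ++ (W4 ++ [x, y]), u < v) ∧
      (∀ u ∈ W2, ∀ v ∈ W4 ++ [x, y], u < v) ∧ ∀ u ∈ W4, ∀ v ∈ [x, y], u < v := by
  obtain ⟨hP5, P0, P2, P4, P1, P3⟩ :
      ∃ (h : P.length = 5), P[0] = 1 ∧ P[2] = 2 ∧ P[4] = 3 ∧ 4 ≤ P[1] ∧ 4 ≤ P[3] := by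
    rcases hP with rfl | rfl <;> simp
  have lt' : ∀ i j (hi : i < 5) (hj : j < 5), P[i] < P[j] →
      ∀ u ∈ [W0, [x], W2, [y], W4][i], ∀ v ∈ [W0, [x], W2, [y], W4][j], u < v :=
    fun i j hi hj hPij u hu v hv => horder j i hj hi hPij v hv u hu
  refine ⟨fun u hu v hv => ?_, fun u hu v hv => ?_, fun u hu v hv => ?_⟩ <;>
    simp only [mem_append, mem_cons, not_mem_nil, or_false] at hv
  · rcases hv with hv | hv | hv | hv
    · exact lt' 0 2 (by simp) (by simp) (by omega) u hu v hv
    · exact lt' 0 4 (by simp) (by simp) (by omega) u hu v hv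
    · exact lt' 0 1 (by simp) (by simp) (by omega) u hu v (by simpa)
    · exact lt' 0 3 (by simp) (by simp) (by omega) u hu v (by simpa)
  · rcases hv with hv | hv | hv
    · exact lt' 2 4 (by simp) (by simp) (by omega) u hu v hv
    · exact lt' 2 1 (by simp) (by simp) (by omega) u hu v (by simpa)
    · exact lt' 2 3 (by simp) (by simp) (by omega) u hu v (by simpa)
  · rcases hv with hv | hv
    · exact lt' 4 1 (by simp) (by simp) (by omega) u hu v (by simpa)
    · exact lt' 4 3 (by simp) (by simp) (by omega) u hu v (by simpa)

theorem exists_glue_of_admissible {w : List ℕ} (hw : Admissible w) (h2 : 2 ≤ w.length) :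
    ∃ f A B C, Admissible A ∧ Admissible B ∧ Admissible C ∧ w = glue f A B C := by
  obtain ⟨hw, _ | _ | ⟨P, Bl, hT, Ws, Vs, hlen, hVs, -, horder, hiso, hrec, hzero⟩⟩ := hw
  · simp at h2
  · simp at h2
  obtain ⟨hP, rfl⟩ : (P = [1, 4, 2, 5, 3] ∨ P = [1, 5, 2, 4, 3]) ∧
      Bl = [true, false, true, false, true] := by
    simp only [templates, mem_cons, Prod.mk.injEq, not_mem_nil, or_false] at hT
    tauto
  obtain ⟨W0, W1, W2, W3, W4, rfl⟩ :=
    eq_five_of_length_eq (hlen.trans (by rcases hP with rfl | rfl <;> rfl))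
  obtain ⟨V0, V1, V2, V3, V4, rfl⟩ := eq_five_of_length_eq hVs
  obtain ⟨x, rfl⟩ := length_eq_one_iff.mp (hzero 1 (by simp) (by simp) rfl)
  obtain ⟨y, rfl⟩ := length_eq_one_iff.mp (hzero 3 (by simp) (by simp) rfl)
  obtain ⟨o0, o2, o4⟩ := blocks_lt_of_template hP hlen horder
  have hV : ∀ i (hi : i < 5), OrderIsoWord [W0, [x], W2, [y], W4][i] [V0, V1, V2, V3, V4][i] ∧
      Admissible [V0, V1, V2, V3, V4][i] :=
    fun i hi => ⟨(hiso i hi).2, (hiso i hi).1, hrec i hi⟩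
  simpa using exists_glue_of_blocks (by simpa using hw) o0 o2 o4 (hV 0 (by simp)).1
    (hV 0 (by simp)).2 (hV 2 (by simp)).1 (hV 2 (by simp)).2 (hV 4 (by simp)).1 (hV 4 (by simp)).2

theorem admissible_iff_exists_glue {w : List ℕ} (h2 : 2 ≤ w.length) :
    Admissible w ↔
      ∃ f A B C, Admissible A ∧ Admissible B ∧ Admissible C ∧ w = glue f A B C := by
  refine ⟨fun hw => exists_glue_of_admissible hw h2, ?_⟩
  rintro ⟨f, A, B, C, hA, hB, hC, rfl⟩
  exact ⟨isPermWord_glue f hA.1 hB.1 hC.1, inS_glue f hA hB hC⟩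

end

section

open Finset

theorem Sset_finite (Ts : List (List ℕ × List Bool)) (n : ℕ) : (Sset Ts n).Finite :=
  (List.range' 1 n).permutations.toFinset.finite_toSet.subset fun w ⟨hlen, hw, _⟩ => by
    simpa [← hlen, IsPermWord] using hw

noncomputable def admissibleWords (n : ℕ) : Finset (List ℕ) :=
  (Sset_finite templates n).toFinset

theorem mem_admissibleWords {n : ℕ} {w : List ℕ} :
    w ∈ admissibleWords n ↔ w.length = n ∧ Admissible w :=
  Set.Finite.mem_toFinset _

theorem admissibleWords_zero : admissibleWords 0 = {[]} := by
  ext w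
  simp only [mem_admissibleWords, mem_singleton, List.length_eq_zero_iff]
  exact ⟨And.left, fun h => ⟨h, h ▸ ⟨by simp [IsPermWord], .nil⟩⟩⟩

theorem admissibleWords_one : admissibleWords 1 = {[1]} := by
  ext w
  simp only [mem_admissibleWords, mem_singleton]
  refine ⟨fun ⟨hlen, hw, _⟩ => ?_, ?_⟩
  · obtain ⟨x, rfl⟩ := List.length_eq_one_iff.mp hlen
    simpa [IsPermWord] using hw
  · rintro rfl
    exact ⟨rfl, isPermWord_singleton, .single 1⟩

noncomputable def gluedWords (a b c : ℕ) : Finset (List ℕ) :=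
  (univ ×ˢ admissibleWords a ×ˢ admissibleWords b ×ˢ admissibleWords c).image
    fun p => glue p.1 p.2.1 p.2.2.1 p.2.2.2

theorem mem_gluedWords {a b c : ℕ} {w : List ℕ} : w ∈ gluedWords a b c ↔ ∃ f,
    ∃ A ∈ admissibleWords a, ∃ B ∈ admissibleWords b, ∃ C ∈ admissibleWords c,
      glue f A B C = w := by
  simp only [gluedWords, mem_image, mem_product, mem_univ, true_and, Prod.exists,
    exists_and_left, and_assoc]

theorem card_gluedWords (a b c : ℕ) : #(gluedWords a b c) =
    2 * #(admissibleWords a) * #(admissibleWords b) * #(admissibleWords c) := by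
  rw [gluedWords, card_image_of_injOn, card_product, card_product, card_product, card_univ,
    Fintype.card_bool]
  · ring
  rintro ⟨f, A, B, C⟩ hp ⟨f', A', B', C'⟩ hp' h
  simp only [coe_product, Set.mem_prod, mem_coe, mem_admissibleWords] at hp hp'
  obtain ⟨rfl, rfl, rfl, rfl⟩ := glue_inj hp.2.1.2.1 hp.2.2.1.2.1 hp'.2.1.2.1 hp'.2.2.1.2.1 h
  rfl

theorem disjoint_gluedWords {a b c a' b' c' : ℕ} (h : a ≠ a' ∨ b ≠ b') :
    Disjoint (gluedWords a b c) (gluedWords a' b' c') := by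
  refine disjoint_left.mpr fun w hw hw' => ?_
  obtain ⟨f, A, hA, B, hB, C, -, rfl⟩ := mem_gluedWords.mp hw
  obtain ⟨f', A', hA', B', hB', C', -, h'⟩ := mem_gluedWords.mp hw'
  rw [mem_admissibleWords] at hA hB hA' hB'
  obtain ⟨-, rfl, rfl, -⟩ := glue_inj hA'.2.1 hB'.2.1 hA.2.1 hB.2.1 h'
  omega

theorem admissibleWords_eq_biUnion {n : ℕ} (hn : 2 ≤ n) :
    admissibleWords n = (Icc 1 (n - 1)).biUnion fun i =>
      (Icc (i + 1) n).biUnion fun j => gluedWords (i - 1) (j - i - 1) (n - j) := by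
  ext w
  simp only [mem_biUnion, mem_Icc, mem_gluedWords, mem_admissibleWords]
  constructor
  · rintro ⟨rfl, hw⟩
    obtain ⟨f, A, B, C, hA, hB, hC, rfl⟩ := (admissible_iff_exists_glue hn).mp hw
    rw [length_glue]
    exact ⟨A.length + 1, by omega, A.length + B.length + 2, by omega, f, A,
      ⟨by omega, hA⟩, B, ⟨by omega, hB⟩, C, ⟨by omega, hC⟩, rfl⟩
  · rintro ⟨i, hi, j, hj, f, A, ⟨hlA, hA⟩, B, ⟨hlB, hB⟩, C, ⟨hlC, hC⟩, rfl⟩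
    refine ⟨by rw [length_glue]; omega, (admissible_iff_exists_glue ?_).mpr
      ⟨f, A, B, C, hA, hB, hC, rfl⟩⟩
    rw [length_glue]
    omega

theorem card_admissibleWords {n : ℕ} (hn : 2 ≤ n) :
    #(admissibleWords n) = ∑ i ∈ Icc 1 (n - 1), ∑ j ∈ Icc (i + 1) n,
      2 * #(admissibleWords (i - 1)) * #(admissibleWords (j - i - 1)) *
        #(admissibleWords (n - j)) := by
  rw [admissibleWords_eq_biUnion hn, card_biUnion]
  · refine sum_congr rfl fun i hi => ?_
    rw [card_biUnion]
    · exact sum_congr rfl fun j _ => card_gluedWords _ _ _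
    · intro j hj j' hj' hne
      simp only [coe_Icc, Set.mem_Icc, mem_Icc] at hi hj hj'
      exact disjoint_gluedWords (.inr (by omega))
  · intro i hi i' hi' hne
    simp only [coe_Icc, Set.mem_Icc] at hi hi'
    exact (disjoint_biUnion_left _ _ _).mpr fun j _ =>
      (disjoint_biUnion_right _ _ _).mpr fun j' _ => disjoint_gluedWords (.inl (by omega))

end

/-- Let `𝒯 = {(14253, 10101), (15243, 10101)}` and let `s 0 = s 1 = 1`
and, for `n > 1`, `s n = ∑_{i=1}^{n-1} ∑_{j=i+1}^{n} 2 * s (i-1) * s (j-i-1) * s (n-j)`.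
Then `|S_{n,𝒯}| = s n` for all `n ≥ 0`. -/
theorem templates_14253_15243_card (s : ℕ → ℕ)
    (h0 : s 0 = 1) (h1 : s 1 = 1)
    (hrec : ∀ n, 1 < n → s n = ∑ i ∈ Finset.Icc 1 (n - 1), ∑ j ∈ Finset.Icc (i + 1) n,
      2 * s (i - 1) * s (j - i - 1) * s (n - j))
    (n : ℕ) :
    Nat.card (Sset [([1, 4, 2, 5, 3], [true, false, true, false, true]),
      ([1, 5, 2, 4, 3], [true, false, true, false, true])] n) = s n := by
  rw [Nat.card_coe_set_eq, Set.ncard_eq_toFinset_card _ (Sset_finite _ n)]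
  change (admissibleWords n).card = s n
  induction n using Nat.strong_induction_on with
  | _ n ih =>
    match n with
    | 0 => simp [admissibleWords_zero, h0]
    | 1 => simp [admissibleWords_one, h1]
    | n + 2 =>
      rw [card_admissibleWords (by omega), hrec _ (by omega)]
      refine Finset.sum_congr rfl fun i hi => Finset.sum_congr rfl fun j hj => ?_
      simp only [Finset.mem_Icc] at hi hj
      rw [ih (i - 1) (by omega), ih (j - i - 1) (by omega), ih (n + 2 - j) (by omega)]
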